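/- Let K and D be positive integers and C_X, C' ≥ 0. Let a_1, …, a_K ∈ ℝ satisfy Σ_{k=1}^K a_k² ≤ 2 C_X / K, let m_1, …, m_K ∈ ℝ satisfy Σ_{k=1}^K m_k² ≤ C', and let s_1², …, s_K² ≥ 0. Then | Σ_{k=1}^K a_k · erf( m_k / √(1 + 2 s_k²) ) | ≤ (2 C_X)^{1/2} · (1 − exp(−(4/π) C' / K))^{1/2}. In particular, if C_X and C' are fixed as K → ∞, this bound tends to 0. -/

import Mathlib

/-!
The key estimate is Pólya's bound `erf x ^ 2 ≤ 1 - exp (-(4 / π) x²)`. It comes from the identity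
`erf x ^ 2 = 1 - (4 / π) ∫₀¹ exp (-x² (1 + t²)) / (1 + t²) dt` (both sides have the same derivative
and agree at `0`) and Jensen's inequality for the probability density `(4 / π) / (1 + t²)` on
`[0, 1]`. Concavity of `u ↦ 1 - exp (-u)` then bounds `∑ₖ erf (xₖ) ^ 2` by
`K (1 - exp (-(4 / π) C' / K))` whenever `∑ₖ xₖ ^ 2 ≤ C'`, and Cauchy–Schwarz against `a` finishes.
-/

/-- The Gauss error function `erf(z) = ∫_0^z (2/√π) exp(-t²) dt`. -/
noncomputable def erf (z : ℝ) : ℝ :=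
  ∫ t in (0 : ℝ)..z, 2 / Real.sqrt Real.pi * Real.exp (-t ^ 2)

open Real MeasureTheory Filter Topology

lemma exp_mul_one_add_sub_le (a x : ℝ) : exp a * (1 + (x - a)) ≤ exp x := by
  calc exp a * (1 + (x - a)) ≤ exp a * exp (x - a) := by
        gcongr; linarith [add_one_le_exp (x - a)]
    _ = exp x := by rw [← exp_add, add_sub_cancel]

@[simp] lemma erf_zero : erf 0 = 0 := by simp [erf]

lemma hasDerivAt_erf (x : ℝ) : HasDerivAt erf (2 / √π * exp (-x ^ 2)) x := by
  have hc : Continuous fun t : ℝ => 2 / √π * exp (-t ^ 2) := by fun_prop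
  exact intervalIntegral.integral_hasDerivAt_right (hc.intervalIntegrable 0 x)
    (hc.stronglyMeasurableAtFilter _ _) hc.continuousAt

lemma integral_mul_exp_neg_mul_sq (x : ℝ) :
    ∫ t in (0 : ℝ)..1, x * exp (-(x * t) ^ 2) = √π / 2 * erf x := by
  rcases eq_or_ne x 0 with rfl | hx
  · simp
  rw [intervalIntegral.integral_const_mul,
    intervalIntegral.integral_comp_mul_left (fun s => exp (-s ^ 2)) hx, erf,
    intervalIntegral.integral_const_mul, mul_zero, mul_one, smul_eq_mul, mul_inv_cancel_left₀ hx]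
  field_simp

noncomputable def erfSqIntegral (x : ℝ) : ℝ :=
  ∫ t in (0 : ℝ)..1, exp (-(x ^ 2 * (1 + t ^ 2))) / (1 + t ^ 2)

lemma erfSqIntegral_zero : erfSqIntegral 0 = π / 4 := by
  simp [erfSqIntegral]

lemma hasDerivAt_erfSqIntegral (x : ℝ) :
    HasDerivAt erfSqIntegral (-√π * exp (-x ^ 2) * erf x) x := by
  have hden (t : ℝ) : 1 + t ^ 2 ≠ 0 := by positivity
  have hderiv (t y : ℝ) : HasDerivAt (fun y => exp (-(y ^ 2 * (1 + t ^ 2))) / (1 + t ^ 2))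
      (-2 * (y * exp (-(y ^ 2 * (1 + t ^ 2))))) y := by
    have h : HasDerivAt (fun y => -(y ^ 2 * (1 + t ^ 2))) (-(2 * y * (1 + t ^ 2))) y := by
      simpa using ((hasDerivAt_pow 2 y).mul_const (1 + t ^ 2)).fun_neg
    exact (h.exp.div_const _).congr_deriv (by field_simp [hden t])
  have hbound (t y : ℝ) (hy : y ∈ Metric.ball x 1) :
      ‖-2 * (y * exp (-(y ^ 2 * (1 + t ^ 2))))‖ ≤ 2 * (|x| + 1) := by
    have hexp : exp (-(y ^ 2 * (1 + t ^ 2))) ≤ 1 := exp_le_one_iff.2 (neg_nonpos.2 (by positivity))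
    have hy' : |y| ≤ |x| + 1 := by
      rw [Metric.mem_ball, dist_eq] at hy
      linarith [abs_sub_abs_le_abs_sub y x]
    calc ‖-2 * (y * exp (-(y ^ 2 * (1 + t ^ 2))))‖
        = 2 * (|y| * exp (-(y ^ 2 * (1 + t ^ 2)))) := by simp [abs_of_pos (exp_pos _)]
      _ ≤ 2 * ((|x| + 1) * 1) := by gcongr
      _ = 2 * (|x| + 1) := by ring
  have hcont (y : ℝ) : Continuous fun t => exp (-(y ^ 2 * (1 + t ^ 2))) / (1 + t ^ 2) :=
    (by fun_prop : Continuous _).div (by fun_prop) hden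
  have key := (intervalIntegral.hasDerivAt_integral_of_dominated_loc_of_deriv_le
    (μ := volume) (a := 0) (b := 1)
    (Metric.ball_mem_nhds x one_pos) (bound := fun _ => 2 * (|x| + 1))
    (.of_forall fun y => (hcont y).aestronglyMeasurable)
    ((hcont x).intervalIntegrable _ _) (by fun_prop)
    (.of_forall fun t _ y hy => hbound t y hy) intervalIntegrable_const
    (.of_forall fun t _ y _ => hderiv t y)).2
  refine key.congr_deriv ?_
  calc ∫ t in (0 : ℝ)..1, -2 * (x * exp (-(x ^ 2 * (1 + t ^ 2))))
      = ∫ t in (0 : ℝ)..1, -2 * exp (-x ^ 2) * (x * exp (-(x * t) ^ 2)) := by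
        refine intervalIntegral.integral_congr fun t _ => ?_
        rw [show -(x ^ 2 * (1 + t ^ 2)) = -x ^ 2 + -(x * t) ^ 2 by ring, exp_add]
        ring
    _ = -√π * exp (-x ^ 2) * erf x := by
        rw [intervalIntegral.integral_const_mul, integral_mul_exp_neg_mul_sq]
        ring

lemma erf_sq_add_erfSqIntegral (x : ℝ) : erf x ^ 2 + 4 / π * erfSqIntegral x = 1 := by
  have hderiv (y : ℝ) : HasDerivAt (fun x => erf x ^ 2 + 4 / π * erfSqIntegral x) 0 y := by
    refine (((hasDerivAt_erf y).fun_pow 2).fun_add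
      ((hasDerivAt_erfSqIntegral y).const_mul (4 / π))).congr_deriv ?_
    field_simp
    rw [sq_sqrt pi_pos.le]
    ring
  have := is_const_of_deriv_eq_zero (fun y => (hderiv y).differentiableAt)
    (fun y => (hderiv y).deriv) x 0
  rw [this, erfSqIntegral_zero, erf_zero]
  field_simp
  ring

lemma pi_div_four_mul_exp_le_erfSqIntegral (x : ℝ) :
    π / 4 * exp (-(4 / π * x ^ 2)) ≤ erfSqIntegral x := by
  set c := 4 / π * x ^ 2
  have hden (t : ℝ) : 0 < 1 + t ^ 2 := by positivity
  have hint : IntervalIntegrable (fun t : ℝ => 1 / (1 + t ^ 2)) volume 0 1 :=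
    (continuous_const.div (by fun_prop) fun t => (hden t).ne').intervalIntegrable _ _
  -- `c` is the mean of `x² (1 + t²)` for the density `(4 / π) / (1 + t²)` on `[0, 1]`, so the
  -- tangent line of `exp` at `-c` gives a minorant of the integrand with integral `(π / 4) e^{-c}`.
  have hminorant :
      ∫ t in (0 : ℝ)..1, exp (-c) * ((1 + c) / (1 + t ^ 2) - x ^ 2) = π / 4 * exp (-c) := by
    simp_rw [mul_sub, mul_div_assoc', ← mul_one_div (exp _ * _)]
    rw [intervalIntegral.integral_sub (hint.const_mul _) intervalIntegrable_const,
      intervalIntegral.integral_const_mul, integral_one_div_one_add_sq]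
    simp only [c, arctan_one, arctan_zero, intervalIntegral.integral_const, sub_zero, smul_eq_mul]
    field_simp
    ring
  rw [← hminorant]
  refine intervalIntegral.integral_mono_on zero_le_one ?_ ?_ fun t _ => ?_
  · refine Continuous.intervalIntegrable ?_ _ _
    exact ((continuous_const.div (by fun_prop) fun t => (hden t).ne').sub
      continuous_const).const_mul _
  · refine Continuous.intervalIntegrable ?_ _ _
    exact (by fun_prop : Continuous _).div (by fun_prop) fun t => (hden t).ne'
  calc exp (-c) * ((1 + c) / (1 + t ^ 2) - x ^ 2)
      = exp (-c) * (1 + (-(x ^ 2 * (1 + t ^ 2)) - -c)) / (1 + t ^ 2) := by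
        field_simp
        ring
    _ ≤ exp (-(x ^ 2 * (1 + t ^ 2))) / (1 + t ^ 2) := by
        gcongr
        exact exp_mul_one_add_sub_le _ _

lemma erf_sq_le_one_sub_exp (x : ℝ) : erf x ^ 2 ≤ 1 - exp (-(4 / π * x ^ 2)) := by
  have h := pi_div_four_mul_exp_le_erfSqIntegral x
  have := erf_sq_add_erfSqIntegral x
  have hπ := pi_pos
  calc erf x ^ 2 = 1 - 4 / π * erfSqIntegral x := by linarith
    _ ≤ 1 - 4 / π * (π / 4 * exp (-(4 / π * x ^ 2))) := by gcongr
    _ = 1 - exp (-(4 / π * x ^ 2)) := by field_simp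

open Finset in
lemma card_mul_exp_sum_div_card_le {ι : Type*} (s : Finset ι) (y : ι → ℝ) :
    #s * exp ((∑ i ∈ s, y i) / #s) ≤ ∑ i ∈ s, exp (y i) := by
  set c := (∑ i ∈ s, y i) / #s
  have hmean : ∑ i ∈ s, (y i - c) = 0 := by
    rcases s.eq_empty_or_nonempty with rfl | hs
    · simp
    rw [sum_sub_distrib, sum_const, nsmul_eq_mul, mul_div_cancel₀ _ (by simpa using hs.ne_empty),
      sub_self]
  calc #s * exp c = ∑ i ∈ s, exp c * (1 + (y i - c)) := by
        rw [← mul_sum, sum_add_distrib, hmean]; simp [mul_comm]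
    _ ≤ ∑ i ∈ s, exp (y i) := sum_le_sum fun i _ => exp_mul_one_add_sub_le c (y i)

open Finset in
lemma sum_one_sub_exp_neg_le {ι : Type*} (s : Finset ι) (u : ι → ℝ) :
    ∑ i ∈ s, (1 - exp (-u i)) ≤ #s * (1 - exp (-(∑ i ∈ s, u i) / #s)) := by
  have := card_mul_exp_sum_div_card_le s (fun i => -u i)
  rw [sum_neg_distrib] at this
  rw [sum_sub_distrib, sum_const, nsmul_one, mul_sub, mul_one]
  linarith

open Finset in
lemma sum_erf_sq_le {ι : Type*} (s : Finset ι) (x : ι → ℝ) :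
    ∑ i ∈ s, erf (x i) ^ 2 ≤ #s * (1 - exp (-(4 / π * ∑ i ∈ s, x i ^ 2) / #s)) :=
  calc ∑ i ∈ s, erf (x i) ^ 2 ≤ ∑ i ∈ s, (1 - exp (-(4 / π * x i ^ 2))) :=
        sum_le_sum fun i _ => erf_sq_le_one_sub_exp (x i)
    _ ≤ #s * (1 - exp (-(4 / π * ∑ i ∈ s, x i ^ 2) / #s)) := by
        simpa only [mul_sum] using sum_one_sub_exp_neg_le s fun i => 4 / π * x i ^ 2

lemma div_sqrt_sq_le_sq (x : ℝ) {r : ℝ} (hr : 1 ≤ r) : (x / √r) ^ 2 ≤ x ^ 2 := by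
  rw [div_pow, sq_sqrt (by linarith)]
  exact div_le_self (sq_nonneg x) hr

lemma tendsto_one_sub_exp_div_natCast (b : ℝ) :
    Tendsto (fun n : ℕ => 1 - exp (b / n)) atTop (𝓝 0) := by
  simpa using (tendsto_const_nhds (x := (1 : ℝ))).sub
    ((continuous_exp.tendsto 0).comp (tendsto_const_div_atTop_nhds_zero_nat b))

theorem abs_sum_mul_erf_le (K : ℕ) (hK : 0 < K)
    (CX C' : ℝ) (hCX : 0 ≤ CX)
    (a m s2 : Fin K → ℝ) (hs2 : ∀ k, 0 ≤ s2 k)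
    (ha : ∑ k, a k ^ 2 ≤ 2 * CX / (K : ℝ)) (hm : ∑ k, m k ^ 2 ≤ C') :
    |∑ k, a k * erf (m k / Real.sqrt (1 + 2 * s2 k))| ≤
      (2 * CX) ^ ((1 : ℝ) / 2) *
        (1 - Real.exp (-(4 / Real.pi) * C' / (K : ℝ))) ^ ((1 : ℝ) / 2) ∧
    Filter.Tendsto
      (fun K : ℕ => (2 * CX) ^ ((1 : ℝ) / 2) *
        (1 - Real.exp (-(4 / Real.pi) * C' / (K : ℝ))) ^ ((1 : ℝ) / 2))
      Filter.atTop (nhds 0) := by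
  refine ⟨?_, by simpa using ((tendsto_one_sub_exp_div_natCast _).rpow_const
    (Or.inr one_half_pos.le)).const_mul ((2 * CX) ^ ((1 : ℝ) / 2))⟩
  set E := exp (-(4 / π) * C' / K) with hE
  set x := fun k => m k / √(1 + 2 * s2 k)
  have hx : ∑ k, x k ^ 2 ≤ C' := (Finset.sum_le_sum fun k _ =>
    div_sqrt_sq_le_sq (m k) (by linarith [hs2 k])).trans hm
  have hsum : ∑ k, erf (x k) ^ 2 ≤ K * (1 - E) := by
    refine (sum_erf_sq_le Finset.univ x).trans ?_
    rw [Finset.card_univ, Fintype.card_fin, hE, neg_mul]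
    gcongr
  have hsq : (∑ k, a k * erf (x k)) ^ 2 ≤ 2 * CX * (1 - E) := calc
    (∑ k, a k * erf (x k)) ^ 2 ≤ (∑ k, a k ^ 2) * ∑ k, erf (x k) ^ 2 :=
      Finset.sum_mul_sq_le_sq_mul_sq _ _ _
    _ ≤ 2 * CX / K * (K * (1 - E)) := by gcongr
    _ = 2 * CX * (1 - E) := by field_simp
  rw [← sqrt_eq_rpow, ← sqrt_eq_rpow, ← sqrt_mul (by positivity)]
  exact abs_le_sqrt hsq
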